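/- Let n and r be positive integers and let w ∈ S(n,r) be a word with the matching property. Then the number of double descents k of w such that, letting ℓ be the largest index with 1 ≤ ℓ < k and w_{ℓ−1} < w_k, one has w_ℓ > w_k, equals n − 2·asc(w). In particular, every w ∈ S(n,r) with the matching property satisfies asc(w) ≤ n/2. -/

import Mathlib

open scoped Classical

noncomputable section

/-- Value of a word `w : Fin (n+1) → ℕ` at a natural index (junk value `0` out of range). -/
def wv {n : ℕ} (w : Fin (n + 1) → ℕ) (k : ℕ) : ℕ :=
  if h : k < n + 1 then w ⟨k, h⟩ else 0

/-- The number of ascents of a word `w = (w_0, w_1, …, w_n)`, i.e. the number of indices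
`i ∈ {0,…,n-1}` with `w_i < w_{i+1}`. -/
def asc {n : ℕ} (w : Fin (n + 1) → ℕ) : ℕ :=
  ((Finset.range n).filter fun i => wv w i < wv w (i + 1)).card

/-- The set `S(n,r)` of Smirnov words `w = (w_0, …, w_n) ∈ {0,…,r-1}^{n+1}` with
`w_0 = w_n = 0` and no two consecutive entries equal. -/
def smirnov (n r : ℕ) : Finset (Fin (n + 1) → ℕ) :=
  (Fintype.piFinset fun _ => Finset.range r).filter fun w =>
    wv w 0 = 0 ∧ wv w n = 0 ∧ ∀ i < n, wv w i ≠ wv w (i + 1)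

/-- `k ∈ {1,…,n-1}` is a double ascent of `w` if `w_{k-1} < w_k < w_{k+1}`. -/
def doubleAscent {n : ℕ} (w : Fin (n + 1) → ℕ) (k : ℕ) : Prop :=
  1 ≤ k ∧ k < n ∧ wv w (k - 1) < wv w k ∧ wv w k < wv w (k + 1)

/-- `k ∈ {1,…,n-1}` is a double descent of `w` if `w_{k-1} > w_k > w_{k+1}`. -/
def doubleDescent {n : ℕ} (w : Fin (n + 1) → ℕ) (k : ℕ) : Prop :=
  1 ≤ k ∧ k < n ∧ wv w k < wv w (k - 1) ∧ wv w (k + 1) < wv w k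

/-- `w` has the matching property: for every double ascent `k` of `w` there is a double
descent `ℓ > k` with `w_k = w_ℓ` and `w_k ≤ w_j` for all `k < j < ℓ`. -/
def hasMatching {n : ℕ} (w : Fin (n + 1) → ℕ) : Prop :=
  ∀ k, doubleAscent w k →
    ∃ l, k < l ∧ doubleDescent w l ∧ wv w k = wv w l ∧
      ∀ j, k < j → j < l → wv w k ≤ wv w j

/-- The set of indices `ℓ` with `k < ℓ < n` and `w_{ℓ+1} < w_k`. -/
def rightSet {n : ℕ} (w : Fin (n + 1) → ℕ) (k : ℕ) : Set ℕ :=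
  {l | k < l ∧ l < n ∧ wv w (l + 1) < wv w k}

/-- The set of indices `ℓ` with `1 ≤ ℓ < k` and `w_{ℓ-1} < w_k`. -/
def leftSet {n : ℕ} (w : Fin (n + 1) → ℕ) (k : ℕ) : Set ℕ :=
  {l | 1 ≤ l ∧ l < k ∧ wv w (l - 1) < wv w k}

/-- The word `w'` obtained from `w` by deleting `w_k` and inserting it between
`w_{ℓ-1}` and `w_ℓ` (for `ℓ < k`): `w'_ℓ = w_k`, `w'_{i+1} = w_i` for `ℓ ≤ i < k`,
and `w'_i = w_i` for all other indices. -/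
def leftMove {n : ℕ} (w : Fin (n + 1) → ℕ) (k l : ℕ) : Fin (n + 1) → ℕ :=
  fun i => if (i : ℕ) = l then wv w k
    else if l < (i : ℕ) ∧ (i : ℕ) ≤ k then wv w ((i : ℕ) - 1) else w i

/-- The word `w''` obtained from `w` by deleting `w_k` and inserting it between
`w_ℓ` and `w_{ℓ+1}` (for `k < ℓ`): `w''_ℓ = w_k`, `w''_{i-1} = w_i` for `k < i ≤ ℓ`,
and `w''_i = w_i` for all other indices. -/
def rightMove {n : ℕ} (w : Fin (n + 1) → ℕ) (k l : ℕ) : Fin (n + 1) → ℕ :=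
  fun i => if (i : ℕ) = l then wv w k
    else if k ≤ (i : ℕ) ∧ (i : ℕ) < l then wv w ((i : ℕ) + 1) else w i


lemma leftSet_bdd {n : ℕ} (w : Fin (n+1) → ℕ) (k : ℕ) : BddAbove (leftSet w k) :=
  ⟨k, fun _ hy => hy.2.1.le⟩

lemma leftSet_nonempty {n : ℕ} (w : Fin (n+1) → ℕ) (hw0 : wv w 0 = 0)
    (l : ℕ) (hdl : doubleDescent w l) : (leftSet w l).Nonempty := by
  obtain ⟨h1, h2, h3, h4⟩ := hdl
  have hl2 : 2 ≤ l := by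
    by_contra h
    have hl1 : l = 1 := by omega
    subst hl1
    norm_num at h3
    omega
  refine ⟨1, le_rfl, by omega, ?_⟩
  show wv w 0 < wv w l
  omega

lemma sSup_eq_of_matching {n : ℕ} (w : Fin (n+1) → ℕ)
    (k l : ℕ) (hk : doubleAscent w k) (hkl : k < l)
    (heq : wv w k = wv w l)
    (hmin : ∀ j, k < j → j < l → wv w k ≤ wv w j) :
    sSup (leftSet w l) = k := by
  have hkmem : k ∈ leftSet w l := ⟨hk.1, hkl, by rw [← heq]; exact hk.2.2.1⟩
  have hbdd := leftSet_bdd w l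
  have hle : k ≤ sSup (leftSet w l) := le_csSup hbdd hkmem
  have hmem : sSup (leftSet w l) ∈ leftSet w l := Nat.sSup_mem ⟨k, hkmem⟩ hbdd
  set m := sSup (leftSet w l) with hmdef
  obtain ⟨hm1, hml, hmval⟩ := hmem
  by_contra hne
  have hkm : k < m := by omega
  rcases eq_or_lt_of_le (Nat.succ_le_of_lt hkm) with h | h
  · have : wv w (m-1) = wv w k := by rw [show m - 1 = k by omega]
    omega
  · have := hmin (m-1) (by omega) (by omega)
    omega

lemma structB {n : ℕ} (w : Fin (n+1) → ℕ) (hw0 : wv w 0 = 0)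
    (hne : ∀ i < n, wv w i ≠ wv w (i+1))
    (l : ℕ) (hdl : doubleDescent w l)
    (hle : wv w (sSup (leftSet w l)) ≤ wv w l) :
    doubleAscent w (sSup (leftSet w l)) ∧ wv w (sSup (leftSet w l)) = wv w l ∧
      ∀ j, sSup (leftSet w l) < j → j < l → wv w l ≤ wv w j := by
  have hbdd := leftSet_bdd w l
  have hnon := leftSet_nonempty w hw0 l hdl
  have hmem : sSup (leftSet w l) ∈ leftSet w l := Nat.sSup_mem hnon hbdd
  set k := sSup (leftSet w l) with hkdef
  obtain ⟨hk1, hkl, hkval⟩ := hmem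
  obtain ⟨hl1, hln, hd1, hd2⟩ := hdl
  have hmax : ∀ j, k < j → j < l → wv w l ≤ wv w (j-1) := by
    intro j hj1 hj2
    by_contra hcon
    have hjm : j ∈ leftSet w l := ⟨by omega, hj2, by omega⟩
    have := le_csSup hbdd hjm
    omega
  have hkl2 : k + 1 < l := by
    rcases eq_or_lt_of_le (Nat.succ_le_of_lt hkl) with h | h
    · exfalso
      have : wv w k = wv w (l-1) := by rw [show k = l - 1 by omega]
      omega
    · exact h
  have hwk : wv w k = wv w l := by
    have h1 := hmax (k+1) (by omega) (by omega)
    have h2 : wv w (k+1-1) = wv w k := by rw [Nat.add_sub_cancel]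
    omega
  have hbetween : ∀ j, k < j → j < l → wv w l ≤ wv w j := by
    intro j hj1 hj2
    rcases eq_or_lt_of_le (Nat.succ_le_of_lt hj2) with h | h
    · have : wv w j = wv w (l-1) := by rw [show j = l - 1 by omega]
      omega
    · have h1 := hmax (j+1) (by omega) (by omega)
      have h2 : wv w (j+1-1) = wv w j := by rw [Nat.add_sub_cancel]
      omega
  refine ⟨⟨hk1, by omega, by omega, ?_⟩, hwk, hbetween⟩
  have h1 := hbetween (k+1) (by omega) (by omega)
  have h2 := hne k (by omega)
  omega

lemma injC_aux {n : ℕ} (w : Fin (n+1) → ℕ) (hw0 : wv w 0 = 0)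
    (hne : ∀ i < n, wv w i ≠ wv w (i+1))
    (l l' : ℕ) (hdl : doubleDescent w l) (hdl' : doubleDescent w l')
    (hle : wv w (sSup (leftSet w l)) ≤ wv w l)
    (hle' : wv w (sSup (leftSet w l')) ≤ wv w l')
    (hsup : sSup (leftSet w l) = sSup (leftSet w l'))
    (h : l < l') : False := by
  obtain ⟨hda, hwl, hbet⟩ := structB w hw0 hne l hdl hle
  obtain ⟨hda', hwl', hbet'⟩ := structB w hw0 hne l' hdl' hle'
  rw [← hsup] at hwl' hbet'
  have hd2 := hdl.2.2.2
  rcases eq_or_lt_of_le (Nat.succ_le_of_lt h) with hcase | hcase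
  · have : wv w (l+1) = wv w l' := by rw [show l + 1 = l' by omega]
    omega
  · have hkl : sSup (leftSet w l) < l :=
      (Nat.sSup_mem (leftSet_nonempty w hw0 l hdl) (leftSet_bdd w l)).2.1
    have := hbet' (l+1) (by omega) hcase
    omega

lemma injC {n : ℕ} (w : Fin (n+1) → ℕ) (hw0 : wv w 0 = 0)
    (hne : ∀ i < n, wv w i ≠ wv w (i+1))
    (l l' : ℕ) (hdl : doubleDescent w l) (hdl' : doubleDescent w l')
    (hle : wv w (sSup (leftSet w l)) ≤ wv w l)
    (hle' : wv w (sSup (leftSet w l')) ≤ wv w l')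
    (hsup : sSup (leftSet w l) = sSup (leftSet w l')) : l = l' := by
  rcases lt_trichotomy l l' with h | h | h
  · exact absurd (injC_aux w hw0 hne l l' hdl hdl' hle hle' hsup h) not_false
  · exact h
  · exact absurd (injC_aux w hw0 hne l' l hdl' hdl hle' hle hsup.symm h) not_false

/-- If `w ∈ S(n,r)` has the matching property, then the number of double descents `k`
of `w` whose largest index `ℓ` with `1 ≤ ℓ < k` and `w_{ℓ-1} < w_k` satisfies
`w_ℓ > w_k` equals `n - 2·asc w`; in particular `asc w ≤ n/2`. -/
theorem card_left_matches_eq (n r : ℕ) (hn : 0 < n) (hr : 0 < r)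
    (w : Fin (n + 1) → ℕ) (hw : w ∈ smirnov n r) (hm : hasMatching w) :
    ((((Finset.range n).filter fun k =>
        doubleDescent w k ∧ wv w k < wv w (sSup (leftSet w k))).card : ℤ) =
      (n : ℤ) - 2 * asc w) ∧ 2 * asc w ≤ n := by
  rw [smirnov, Finset.mem_filter] at hw
  obtain ⟨-, hw0, hwn, hne⟩ := hw
  set s := Finset.Ico 1 n with hs
  -- A-count: ascents indexed by their right endpoint
  have hA : ((s.filter fun k => wv w (k-1) < wv w k).card) = asc w := by
    rw [asc]
    apply Finset.card_bij (fun k _ => k - 1)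
    · intro k hk
      simp only [Finset.mem_filter, Finset.mem_Ico, hs] at hk
      simp only [Finset.mem_filter, Finset.mem_range]
      refine ⟨by omega, ?_⟩
      have e : k - 1 + 1 = k := by omega
      rw [e]; exact hk.2
    · intro a ha b hb hab
      simp only [Finset.mem_filter, Finset.mem_Ico, hs] at ha hb
      omega
    · intro i hi
      simp only [Finset.mem_filter, Finset.mem_range] at hi
      refine ⟨i+1, ?_, by omega⟩
      simp only [Finset.mem_filter, Finset.mem_Ico, hs]
      have hin : i + 1 ≠ n := by
        intro h
        have : wv w (i+1) = 0 := by rw [h]; exact hwn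
        omega
      refine ⟨⟨by omega, by omega⟩, ?_⟩
      have e : i + 1 - 1 = i := by omega
      rw [e]; exact hi.2
  -- B-count
  have hB : ((s.filter fun k => wv w k < wv w (k+1)).card) + 1 = asc w := by
    rw [asc]
    have h0 : wv w 0 < wv w 1 := by
      have h1 := hne 0 hn
      have h2 : wv w (0+1) = wv w 1 := by norm_num
      omega
    have hins : Finset.range n = insert 0 s := by
      ext x
      simp only [Finset.mem_range, Finset.mem_insert, Finset.mem_Ico, hs]
      omega
    rw [hins, Finset.filter_insert, if_pos h0, Finset.card_insert_of_notMem]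
    simp [hs]
  -- pointwise counting identity
  have key : (s.filter fun k => doubleDescent w k).card
      + (s.filter fun k => wv w (k-1) < wv w k).card
      + (s.filter fun k => wv w k < wv w (k+1)).card
      = s.card + (s.filter fun k => doubleAscent w k).card := by
    simp only [Finset.card_filter]
    rw [← Finset.sum_add_distrib, ← Finset.sum_add_distrib,
      Finset.card_eq_sum_ones, ← Finset.sum_add_distrib]
    apply Finset.sum_congr rfl
    intro k hk
    simp only [Finset.mem_Ico, hs] at hk
    have h1 : wv w (k-1) ≠ wv w k := by
      have h := hne (k-1) (by omega)
      have e : k - 1 + 1 = k := by omega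
      rwa [e] at h
    have h2 := hne k hk.2
    simp only [doubleDescent, doubleAscent]
    by_cases ha : wv w (k-1) < wv w k <;> by_cases hb : wv w k < wv w (k+1) <;> simp [ha, hb, hk.1, hk.2] <;> omega
  -- split double descents by the comparison with the left supremum
  have hsplit : ((s.filter fun k => doubleDescent w k).filter
        fun k => wv w k < wv w (sSup (leftSet w k))).card
      + ((s.filter fun k => doubleDescent w k).filter
        fun k => ¬ (wv w k < wv w (sSup (leftSet w k)))).card
      = (s.filter fun k => doubleDescent w k).card :=
    Finset.card_filter_add_card_filter_not _
  -- bijection between unmatched double descents and double ascents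
  have hbij : ((s.filter fun k => doubleDescent w k).filter
        fun k => ¬ (wv w k < wv w (sSup (leftSet w k)))).card
      = (s.filter fun k => doubleAscent w k).card := by
    apply Finset.card_bij (fun l _ => sSup (leftSet w l))
    · intro l hl
      simp only [Finset.mem_filter, Finset.mem_Ico, hs] at hl ⊢
      obtain ⟨⟨hls, hdl⟩, hnlt⟩ := hl
      obtain ⟨hda, -, -⟩ := structB w hw0 hne l hdl (by omega)
      exact ⟨⟨hda.1, hda.2.1⟩, hda⟩
    · intro a ha b hb hab
      simp only [Finset.mem_filter] at ha hb
      obtain ⟨⟨-, hdda⟩, hna⟩ := ha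
      obtain ⟨⟨-, hddb⟩, hnb⟩ := hb
      exact injC w hw0 hne a b hdda hddb (by omega) (by omega) hab
    · intro k hk
      simp only [Finset.mem_filter, Finset.mem_Ico, hs] at hk
      obtain ⟨-, hda⟩ := hk
      obtain ⟨l, hkl, hdl, heq, hmin⟩ := hm k hda
      have hsup : sSup (leftSet w l) = k := sSup_eq_of_matching w k l hda hkl heq hmin
      refine ⟨l, ?_, hsup⟩
      simp only [Finset.mem_filter, Finset.mem_Ico, hs]
      refine ⟨⟨⟨hdl.1, hdl.2.1⟩, hdl⟩, ?_⟩
      rw [hsup, ← heq]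
      omega
  -- identify the target set with the filtered set over Ico 1 n
  have hT : ((Finset.range n).filter fun k =>
      doubleDescent w k ∧ wv w k < wv w (sSup (leftSet w k))).card
      = ((s.filter fun k => doubleDescent w k).filter
        fun k => wv w k < wv w (sSup (leftSet w k))).card := by
    congr 1
    ext k
    simp only [Finset.mem_filter, Finset.mem_range, Finset.mem_Ico, hs]
    constructor
    · rintro ⟨hkn, hdd, hlt⟩
      exact ⟨⟨⟨hdd.1, hkn⟩, hdd⟩, hlt⟩
    · rintro ⟨⟨⟨h1, h2⟩, hdd⟩, hlt⟩
      exact ⟨h2, hdd, hlt⟩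
  have hscard : s.card = n - 1 := by rw [hs, Nat.card_Ico]
  rw [hT]
  exact ⟨by omega, by omega⟩
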